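/- arXiv:2407.07483 — 2 statements merged into one kernel-verified Lean document; each statement's English description precedes it below -/
import Mathlib

section
/- There exists K such that for every integer k ≥ K and every integer i with 0 ≤ i < (log k)² − log k one has (1/2)·i! < k^{i+1} · ∫_0^{(log k)²/k} x^i e^{−k x} dx < (3/2)·i!. -/
/-!
After substituting `y = k x` the quantity is `∫₀ᵀ yⁱ e⁻ʸ dy` with `T = (log k)²`, that is `i!` minus
the tail `∫_T^∞ yⁱ e⁻ʸ dy`, so the upper bound is immediate and the lower bound says the tail is
below `i!/2`. Since `log (yⁱ e⁻ʸ)` is concave, beyond `T` the integrand is dominated by an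
exponential, giving tail `≤ Tⁱ e⁻ᵀ · T / (T - i)`. Against Stirling's `i! ≥ √(2πi) (i/e)ⁱ`, the
inequality `log u ≤ (u - u⁻¹)/2` turns `Tⁱ e⁻ᵀ / (i/e)ⁱ` into the Gaussian factor
`exp (-(T - i)² / (2T))`, which is small enough because `T - i > √T = log k`.
-/

open Real MeasureTheory Set
open scoped Nat

lemma integrableOn_pow_mul_exp_neg_Ioi (i : ℕ) :
    IntegrableOn (fun y : ℝ => y ^ i * exp (-y)) (Ioi 0) := by
  simpa [mul_comm] using GammaIntegral_convergent (s := (i : ℝ) + 1) (by positivity)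

lemma integral_pow_mul_exp_neg_Ioi (i : ℕ) :
    ∫ y in Ioi (0 : ℝ), y ^ i * exp (-y) = i ! := by
  rw [← Gamma_nat_eq_factorial, Gamma_eq_integral (by positivity)]
  simp [mul_comm]

lemma intervalIntegral_pow_mul_exp_neg (i : ℕ) {T : ℝ} (hT : 0 ≤ T) :
    ∫ y in (0 : ℝ)..T, y ^ i * exp (-y) = (i ! : ℝ) - ∫ y in Ioi T, y ^ i * exp (-y) := by
  have hf := integrableOn_pow_mul_exp_neg_Ioi i
  rw [← integral_pow_mul_exp_neg_Ioi i, ← Ioc_union_Ioi_eq_Ioi hT,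
    setIntegral_union (Ioc_disjoint_Ioi le_rfl) measurableSet_Ioi
      (hf.mono_set Ioc_subset_Ioi_self) (hf.mono_set (Ioi_subset_Ioi hT)),
    intervalIntegral.integral_of_le hT]
  ring

lemma pow_succ_mul_integral_pow_mul_exp_neg_mul (i : ℕ) {b : ℝ} (hb : 0 < b) (T : ℝ) :
    b ^ (i + 1) * ∫ x in (0 : ℝ)..T / b, x ^ i * exp (-b * x) =
      ∫ y in (0 : ℝ)..T, y ^ i * exp (-y) := by
  have h : ∀ x : ℝ, b ^ i * (x ^ i * exp (-b * x)) = (b * x) ^ i * exp (-(b * x)) := fun x => by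
    rw [mul_pow, neg_mul]; ring
  rw [pow_succ, mul_comm _ b, mul_assoc, ← intervalIntegral.integral_const_mul]
  simp_rw [h]
  rw [intervalIntegral.mul_integral_comp_mul_left (f := fun y => y ^ i * exp (-y)), mul_zero,
    mul_div_cancel₀ _ hb.ne']

lemma pow_mul_exp_neg_le_tangent (i : ℕ) {T y : ℝ} (hT : 0 < T) (hy : 0 ≤ y) :
    y ^ i * exp (-y) ≤ T ^ i * exp (-T) * exp ((i / T - 1) * (y - T)) := by
  have hpow : (y / T) ^ i ≤ exp (i * (y / T - 1)) := by
    rw [exp_nat_mul]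
    exact pow_le_pow_left₀ (by positivity) (by linarith [add_one_le_exp (y / T - 1)]) i
  calc y ^ i * exp (-y) = T ^ i * (y / T) ^ i * exp (-y) := by
        rw [div_pow, mul_div_cancel₀ _ (by positivity)]
    _ ≤ T ^ i * exp (i * (y / T - 1)) * exp (-y) := by gcongr
    _ = T ^ i * exp (-T) * exp ((i / T - 1) * (y - T)) := by
        rw [mul_assoc, mul_assoc, ← exp_add, ← exp_add]
        congr 2
        field_simp
        ring

lemma integral_pow_mul_exp_neg_Ioi_le (i : ℕ) {T : ℝ} (hT : 0 < T) (hiT : i < T) :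
    ∫ y in Ioi T, y ^ i * exp (-y) ≤ T ^ i * exp (-T) * (T / (T - i)) := by
  set c : ℝ := i / T - 1
  have hc : c < 0 := by
    have : (i : ℝ) / T < 1 := (div_lt_one hT).2 hiT
    linarith
  have hshift : (fun y => exp (c * (y - T))) = fun y => exp (-(c * T)) * exp (c * y) := by
    funext y
    rw [← exp_add]
    ring_nf
  have hint : IntegrableOn (fun y => exp (c * (y - T))) (Ioi T) := by
    rw [hshift]
    exact (integrableOn_exp_mul_Ioi hc T).const_mul _
  have hval : ∫ y in Ioi T, exp (c * (y - T)) = T / (T - i) := by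
    rw [hshift, integral_const_mul, integral_exp_mul_Ioi hc, mul_div_assoc', mul_neg, ← exp_add,
      neg_add_cancel, exp_zero, div_eq_div_iff hc.ne (by linarith)]
    simp only [c]
    field_simp
    ring
  calc ∫ y in Ioi T, y ^ i * exp (-y)
      ≤ ∫ y in Ioi T, T ^ i * exp (-T) * exp (c * (y - T)) :=
        setIntegral_mono_on ((integrableOn_pow_mul_exp_neg_Ioi i).mono_set (Ioi_subset_Ioi hT.le))
          (hint.const_mul _) measurableSet_Ioi fun y hy =>
            pow_mul_exp_neg_le_tangent i hT (hT.trans hy).le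
    _ = T ^ i * exp (-T) * (T / (T - i)) := by rw [integral_const_mul, hval]

lemma log_le_half_sub_inv {u : ℝ} (hu : 1 ≤ u) : log u ≤ (u - u⁻¹) / 2 := by
  rw [← sinh_log (by positivity)]
  exact self_le_sinh_iff.2 (log_nonneg hu)

lemma pow_mul_exp_neg_le_gaussian {i : ℕ} {T : ℝ} (hi : 0 < i) (hiT : i ≤ T) :
    T ^ i * exp (-T) ≤ (i / exp 1) ^ i * exp (-(T - i) ^ 2 / (2 * T)) := by
  have hi' : (0 : ℝ) < i := by exact_mod_cast hi
  have hT : T ≠ 0 := by linarith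
  have hu : 1 ≤ T / i := (one_le_div hi').2 hiT
  have hpow : (T / i) ^ i ≤ exp (i * ((T / i - (T / i)⁻¹) / 2)) := by
    rw [← exp_log (by positivity : 0 < T / i), ← exp_nat_mul, exp_log (by positivity)]
    gcongr
    exact log_le_half_sub_inv hu
  calc T ^ i * exp (-T) = (i : ℝ) ^ i * (T / i) ^ i * exp (-T) := by
        rw [div_pow, mul_div_cancel₀ _ (by positivity)]
    _ ≤ (i : ℝ) ^ i * exp (i * ((T / i - (T / i)⁻¹) / 2)) * exp (-T) := by gcongr
    _ = (i / exp 1) ^ i * exp (-(T - i) ^ 2 / (2 * T)) := by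
        rw [div_pow, ← exp_nat_mul, mul_one, div_mul_eq_mul_div, eq_div_iff (exp_pos _).ne',
          mul_assoc, mul_assoc, ← exp_add, ← exp_add]
        congr 2
        field_simp
        ring

lemma exp_neg_sq_div_mul_div_lt_sqrt {L : ℝ} {i : ℕ} (hL : 3 ≤ L) (hi : 0 < i)
    (hiL : (i : ℝ) < L ^ 2 - L) :
    exp (-(L ^ 2 - i) ^ 2 / (2 * L ^ 2)) * (L ^ 2 / (L ^ 2 - i)) < √(2 * π * i) / 2 := by
  have hi' : (1 : ℝ) ≤ i := by exact_mod_cast hi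
  have hd : L < L ^ 2 - i := by linarith
  have hd0 : 0 < L ^ 2 - i := by linarith
  -- For `i ≥ L²/2` the factor `√(2πi)` grows like `L`; otherwise the Gaussian factor is tiny.
  rcases le_or_gt (L ^ 2) (2 * i) with hlarge | hsmall
  · have hexp : exp (-(L ^ 2 - i) ^ 2 / (2 * L ^ 2)) ≤ 2 / 3 := by
      have h : -(L ^ 2 - i) ^ 2 / (2 * L ^ 2) ≤ -(1 / 2) := by
        rw [div_le_iff₀ (by positivity)]
        nlinarith
      calc exp (-(L ^ 2 - i) ^ 2 / (2 * L ^ 2)) ≤ exp (-(1 / 2)) := exp_le_exp.2 h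
        _ ≤ 2 / 3 := by
          rw [exp_neg, inv_le_comm₀ (exp_pos _) (by norm_num)]
          linarith [add_one_le_exp (1 / 2 : ℝ)]
    have hratio : L ^ 2 / (L ^ 2 - i) < L := by
      rw [div_lt_iff₀ hd0]
      nlinarith
    have hsqrt : 4 / 3 * L ≤ √(2 * π * i) := by
      rw [le_sqrt (by positivity) (by positivity)]
      nlinarith [pi_gt_three]
    calc exp (-(L ^ 2 - i) ^ 2 / (2 * L ^ 2)) * (L ^ 2 / (L ^ 2 - i)) < 2 / 3 * L := by
          have := mul_le_mul_of_nonneg_right hexp (by positivity : 0 ≤ L ^ 2 / (L ^ 2 - i))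
          linarith
      _ ≤ √(2 * π * i) / 2 := by linarith
  · have hexp : exp (-(L ^ 2 - i) ^ 2 / (2 * L ^ 2)) < 1 / 2 := by
      have h : -(L ^ 2 - i) ^ 2 / (2 * L ^ 2) ≤ -1 := by
        rw [div_le_iff₀ (by positivity)]
        nlinarith
      exact (exp_le_exp.2 h).trans_lt exp_neg_one_lt_half
    have hratio : L ^ 2 / (L ^ 2 - i) < 2 := by
      rw [div_lt_iff₀ hd0]
      linarith
    have hsqrt : 2 ≤ √(2 * π * i) := by
      rw [le_sqrt (by positivity) (by positivity)]
      nlinarith [pi_gt_three]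
    calc exp (-(L ^ 2 - i) ^ 2 / (2 * L ^ 2)) * (L ^ 2 / (L ^ 2 - i)) < 1 / 2 * 2 := by
          gcongr
      _ ≤ √(2 * π * i) / 2 := by linarith

lemma pow_mul_exp_neg_mul_div_lt_half_factorial {L : ℝ} {i : ℕ} (hL : 3 ≤ L)
    (hiL : (i : ℝ) < L ^ 2 - L) :
    (L ^ 2) ^ i * exp (-L ^ 2) * (L ^ 2 / (L ^ 2 - i)) < i ! / 2 := by
  rcases Nat.eq_zero_or_pos i with rfl | hi
  · have : -L ^ 2 ≤ -1 := by nlinarith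
    simpa [div_self (by positivity : L ^ 2 ≠ 0)] using
      (exp_le_exp.2 this).trans_lt exp_neg_one_lt_half
  · have hd0 : 0 < L ^ 2 - i := by nlinarith
    calc (L ^ 2) ^ i * exp (-L ^ 2) * (L ^ 2 / (L ^ 2 - i))
        ≤ (i / exp 1) ^ i * exp (-(L ^ 2 - i) ^ 2 / (2 * L ^ 2)) * (L ^ 2 / (L ^ 2 - i)) :=
          mul_le_mul_of_nonneg_right (pow_mul_exp_neg_le_gaussian hi (by linarith))
            (div_pos (by positivity) hd0).le
      _ < (i / exp 1) ^ i * (√(2 * π * i) / 2) := by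
          rw [mul_assoc]
          gcongr
          exact exp_neg_sq_div_mul_div_lt_sqrt hL hi hiL
      _ ≤ i ! / 2 := by linarith [Stirling.le_factorial_stirling i]

/-- There exists `K` such that for every integer `k ≥ K` and every integer `i` with
`0 ≤ i < (log k)² − log k` one has
`(1/2)·i! < k^{i+1} · ∫_0^{(log k)²/k} x^i e^{−k x} dx < (3/2)·i!`. -/
theorem incomplete_gamma_integral_factorial_bounds :
    ∃ K : ℕ, ∀ k : ℕ, K ≤ k → ∀ i : ℕ, (i : ℝ) < (Real.log k) ^ 2 - Real.log k →
      (1 / 2) * (Nat.factorial i : ℝ) <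
          (k : ℝ) ^ (i + 1) *
            (∫ x in (0:ℝ)..((Real.log k) ^ 2 / k), x ^ i * Real.exp (-(k : ℝ) * x)) ∧
        (k : ℝ) ^ (i + 1) *
            (∫ x in (0:ℝ)..((Real.log k) ^ 2 / k), x ^ i * Real.exp (-(k : ℝ) * x)) <
          (3 / 2) * (Nat.factorial i : ℝ) := by
  refine ⟨⌈exp 3⌉₊, fun k hk i hi => ?_⟩
  have hk0 : (0 : ℝ) < k := (exp_pos 3).trans_le (Nat.ceil_le.1 hk)
  have hL : 3 ≤ log k := (le_log_iff_exp_le hk0).2 (Nat.ceil_le.1 hk)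
  have hT : 0 < log k ^ 2 := by positivity
  have htail_nonneg : 0 ≤ ∫ y in Ioi (log k ^ 2), y ^ i * exp (-y) :=
    setIntegral_nonneg measurableSet_Ioi fun y hy => by
      have : 0 < y := hT.trans hy
      positivity
  have htail_lt : ∫ y in Ioi (log k ^ 2), y ^ i * exp (-y) < i ! / 2 :=
    (integral_pow_mul_exp_neg_Ioi_le i hT (by linarith)).trans_lt
      (pow_mul_exp_neg_mul_div_lt_half_factorial hL hi)
  have hfact : (0 : ℝ) < i ! := by exact_mod_cast i.factorial_pos
  rw [pow_succ_mul_integral_pow_mul_exp_neg_mul i hk0, intervalIntegral_pow_mul_exp_neg i hT.le]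
  constructor <;> linarith
end

section
/- There exists K such that for every integer k ≥ K and every integer i with i ≥ (log k)² − log k one has ∫_0^{(log k)²/k} x^i e^{−k x} dx ≥ k^{−(i+1)} · ((log k)² − 2 log k)^i · e^{−(log k)² + 2 log k}. -/
open Real MeasureTheory

/-- There exists `K` such that for every integer `k ≥ K` and every integer `i` with
`i ≥ (log k)² − log k` one has
`∫_0^{(log k)²/k} x^i e^{−k x} dx ≥ k^{−(i+1)} · ((log k)² − 2 log k)^i · e^{−(log k)² + 2 log k}`. -/
theorem incomplete_gamma_integral_lower_bound :
    ∃ K : ℕ, ∀ k : ℕ, K ≤ k → ∀ i : ℕ, (Real.log k) ^ 2 - Real.log k ≤ (i : ℝ) →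
      ((k : ℝ) ^ (i + 1))⁻¹ * ((Real.log k) ^ 2 - 2 * Real.log k) ^ i *
          Real.exp (-(Real.log k) ^ 2 + 2 * Real.log k) ≤
        ∫ x in (0:ℝ)..((Real.log k) ^ 2 / k), x ^ i * Real.exp (-(k : ℝ) * x) := by
  refine ⟨5000, fun k hk i hi => ?_⟩
  have hk0 : (0:ℝ) < k := by
    have : (5000:ℝ) ≤ k := by exact_mod_cast hk
    linarith
  set L := Real.log k with hLdef
  have he1 := Real.exp_one_lt_d9
  have hexp8 : Real.exp 8 < 5000 := by
    have h8 : Real.exp 8 = Real.exp 1 ^ 8 := by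
      rw [← Real.exp_nat_mul]; norm_num
    rw [h8]
    calc Real.exp 1 ^ 8 ≤ 2.7182818286 ^ 8 :=
          pow_le_pow_left₀ (Real.exp_pos 1).le he1.le 8
      _ < 5000 := by norm_num
  have hL : 8 ≤ L := by
    rw [hLdef, Real.le_log_iff_exp_le hk0]
    have : (5000:ℝ) ≤ k := by exact_mod_cast hk
    linarith
  set c : ℝ := (L ^ 2 - 2 * L) / k with hc
  set b : ℝ := L ^ 2 / k with hb
  have hc0 : 0 < c := by apply div_pos _ hk0; nlinarith
  have hcb : c < b := by apply div_lt_div_of_pos_right _ hk0; nlinarith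
  have hkc : (k:ℝ) * c = L ^ 2 - 2 * L := by
    rw [hc]; field_simp
  have hcont : Continuous fun x : ℝ => x ^ i * Real.exp (-(k : ℝ) * x) := by
    continuity
  have hInt1 : IntervalIntegrable (fun x : ℝ => x ^ i * Real.exp (-(k : ℝ) * x))
      volume 0 c := hcont.intervalIntegrable _ _
  have hInt2 : IntervalIntegrable (fun x : ℝ => x ^ i * Real.exp (-(k : ℝ) * x))
      volume c b := hcont.intervalIntegrable _ _
  -- pointwise lower bound on [c, b]
  have hpt : ∀ x ∈ Set.Icc c b,
      c ^ i * Real.exp (-(k:ℝ) * c - 2) ≤ x ^ i * Real.exp (-(k:ℝ) * x) := by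
    intro x hx
    obtain ⟨hxc, hxb⟩ := hx
    have hx0 : 0 < x := lt_of_lt_of_le hc0 hxc
    have hkx0 : 0 < (k:ℝ) * x := by positivity
    set s : ℝ := (k:ℝ) * x - (L ^ 2 - 2 * L) with hs
    have hs0 : 0 ≤ s := by
      have : L ^ 2 - 2 * L ≤ (k:ℝ) * x := by
        rw [← hkc]; exact mul_le_mul_of_nonneg_left hxc hk0.le
      linarith
    have hs2L : s ≤ 2 * L := by
      have : (k:ℝ) * x ≤ L ^ 2 := by
        rw [hb] at hxb
        calc (k:ℝ) * x ≤ (k:ℝ) * (L ^ 2 / k) := mul_le_mul_of_nonneg_left hxb hk0.le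
          _ = L ^ 2 := by field_simp
      linarith
    -- key algebraic inequality
    have key : (s - 2) * ((k:ℝ) * x) ≤ (i:ℝ) * s := by
      have hkx : (k:ℝ) * x = s + (L ^ 2 - 2 * L) := by rw [hs]; ring
      nlinarith [mul_nonneg (by linarith : (0:ℝ) ≤ 2 * L - s)
          (by linarith : (0:ℝ) ≤ s + L - 2),
        mul_nonneg (by linarith : (0:ℝ) ≤ (i:ℝ) - (L ^ 2 - L)) hs0]
    have harith : (k:ℝ) * (x - c) - 2 ≤ (i:ℝ) * (1 - c / x) := by
      have h1cx : 1 - c / x = s / ((k:ℝ) * x) := by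
        rw [hs]; field_simp; nlinarith [hkc]
      have hkxc : (k:ℝ) * (x - c) = s := by rw [hs]; rw [mul_sub, hkc]
      rw [h1cx, hkxc, ← mul_div_assoc, le_div_iff₀ hkx0]
      exact key
    -- exponentiate
    have h1 : Real.exp (1 - c / x) ≤ x / c := by
      have h2 := Real.add_one_le_exp (c / x - 1)
      rw [show (1 : ℝ) - c / x = -(c / x - 1) by ring, Real.exp_neg,
        inv_le_comm₀ (Real.exp_pos _) (by positivity)]
      calc (x / c)⁻¹ = c / x := by rw [inv_div]
        _ ≤ Real.exp (c / x - 1) := by linarith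
    have h3 : Real.exp ((i:ℝ) * (1 - c / x)) ≤ (x / c) ^ i := by
      rw [Real.exp_nat_mul]
      exact pow_le_pow_left₀ (Real.exp_pos _).le h1 i
    have h4 : Real.exp ((k:ℝ) * (x - c) - 2) ≤ (x / c) ^ i :=
      le_trans (Real.exp_le_exp.mpr harith) h3
    calc c ^ i * Real.exp (-(k:ℝ) * c - 2)
        = c ^ i * Real.exp ((k:ℝ) * (x - c) - 2) * Real.exp (-(k:ℝ) * x) := by
          rw [mul_assoc, ← Real.exp_add]; ring_nf
      _ ≤ c ^ i * (x / c) ^ i * Real.exp (-(k:ℝ) * x) := by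
          apply mul_le_mul_of_nonneg_right _ (Real.exp_pos _).le
          exact mul_le_mul_of_nonneg_left h4 (by positivity)
      _ = x ^ i * Real.exp (-(k:ℝ) * x) := by
          have hxx : c * (x / c) = x := by field_simp
          rw [← mul_pow, hxx]
  -- split the integral
  have hsplit : (∫ x in (0:ℝ)..c, x ^ i * Real.exp (-(k:ℝ) * x))
      + (∫ x in c..b, x ^ i * Real.exp (-(k:ℝ) * x))
      = ∫ x in (0:ℝ)..b, x ^ i * Real.exp (-(k:ℝ) * x) :=
    intervalIntegral.integral_add_adjacent_intervals hInt1 hInt2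
  have hnn : 0 ≤ ∫ x in (0:ℝ)..c, x ^ i * Real.exp (-(k:ℝ) * x) := by
    apply intervalIntegral.integral_nonneg hc0.le
    intro x hx
    exact mul_nonneg (pow_nonneg hx.1 i) (Real.exp_pos _).le
  have hmono : (b - c) * (c ^ i * Real.exp (-(k:ℝ) * c - 2))
      ≤ ∫ x in c..b, x ^ i * Real.exp (-(k:ℝ) * x) := by
    have := intervalIntegral.integral_mono_on hcb.le
      (intervalIntegrable_const (c := c ^ i * Real.exp (-(k:ℝ) * c - 2))) hInt2 hpt
    rwa [intervalIntegral.integral_const, smul_eq_mul] at this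
  -- final arithmetic
  have h2L : 1 ≤ 2 * L * Real.exp (-2 : ℝ) := by
    have he2 : Real.exp 2 ≤ 8 := by
      have h2 : Real.exp 2 = Real.exp 1 ^ 2 := by
        rw [← Real.exp_nat_mul]; norm_num
      rw [h2]
      calc Real.exp 1 ^ 2 ≤ 2.7182818286 ^ 2 :=
            pow_le_pow_left₀ (Real.exp_pos 1).le he1.le 2
        _ ≤ 8 := by norm_num
    have hpos : 0 < Real.exp (2:ℝ) := Real.exp_pos 2
    rw [Real.exp_neg, show (2:ℝ) * L * (Real.exp 2)⁻¹ = 2 * L / Real.exp 2 by ring,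
      le_div_iff₀ hpos, one_mul]
    linarith
  have hfinal : ((k : ℝ) ^ (i + 1))⁻¹ * (L ^ 2 - 2 * L) ^ i * Real.exp (-L ^ 2 + 2 * L)
      ≤ (b - c) * (c ^ i * Real.exp (-(k:ℝ) * c - 2)) := by
    have hbc : b - c = 2 * L / k := by rw [hb, hc, div_sub_div_same]; ring_nf
    have hLL : (0:ℝ) < L ^ 2 - 2 * L := by nlinarith
    have hk0' : (k:ℝ) ≠ 0 := ne_of_gt hk0
    have heq : (b - c) * (c ^ i * Real.exp (-(k:ℝ) * c - 2))
        = ((k:ℝ) ^ (i + 1))⁻¹ * (L ^ 2 - 2 * L) ^ i * Real.exp (-L ^ 2 + 2 * L)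
          * (2 * L * Real.exp (-2 : ℝ)) := by
      rw [hbc, hc, div_pow,
        show -(k:ℝ) * ((L ^ 2 - 2 * L) / k) - 2 = (-L ^ 2 + 2 * L) + (-2) by
          field_simp; ring,
        Real.exp_add, pow_succ (k:ℝ) i, mul_inv, div_eq_mul_inv, div_eq_mul_inv]
      ring
    have hA : 0 ≤ ((k:ℝ) ^ (i + 1))⁻¹ * (L ^ 2 - 2 * L) ^ i * Real.exp (-L ^ 2 + 2 * L) := by
      apply mul_nonneg (mul_nonneg (by positivity) (pow_nonneg hLL.le i)) (Real.exp_pos _).le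
    calc ((k : ℝ) ^ (i + 1))⁻¹ * (L ^ 2 - 2 * L) ^ i * Real.exp (-L ^ 2 + 2 * L)
        = ((k:ℝ) ^ (i + 1))⁻¹ * (L ^ 2 - 2 * L) ^ i * Real.exp (-L ^ 2 + 2 * L) * 1 :=
          (mul_one _).symm
      _ ≤ ((k:ℝ) ^ (i + 1))⁻¹ * (L ^ 2 - 2 * L) ^ i * Real.exp (-L ^ 2 + 2 * L)
          * (2 * L * Real.exp (-2 : ℝ)) := mul_le_mul_of_nonneg_left h2L hA
      _ = (b - c) * (c ^ i * Real.exp (-(k:ℝ) * c - 2)) := heq.symm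
  calc ((k : ℝ) ^ (i + 1))⁻¹ * (L ^ 2 - 2 * L) ^ i * Real.exp (-L ^ 2 + 2 * L)
      ≤ (b - c) * (c ^ i * Real.exp (-(k:ℝ) * c - 2)) := hfinal
    _ ≤ ∫ x in c..b, x ^ i * Real.exp (-(k:ℝ) * x) := hmono
    _ ≤ ∫ x in (0:ℝ)..b, x ^ i * Real.exp (-(k:ℝ) * x) := by
        rw [← hsplit]; linarith
end
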